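/- If T and S are rayless trees having distinct Schmidt ranks, then T and S are not of the same topological type, i.e. it is not the case that both T ≤ S and S ≤ T. -/

import Mathlib

universe u v

/-- A topological minor embedding of `H` into `G`: an injective map `toFun` on vertices
together with, for each edge of `H`, a path in `G` joining the images of its endpoints,
such that distinct edges get internally vertex-disjoint paths whose internal vertices
avoid the image of `toFun`. -/
structure TopMinorEmb {V : Type u} {W : Type v} (H : SimpleGraph V) (G : SimpleGraph W) where
  toFun : V → W
  inj : Function.Injective toFun
  path : ∀ ⦃a b : V⦄, H.Adj a b → G.Walk (toFun a) (toFun b)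
  path_isPath : ∀ ⦃a b : V⦄ (h : H.Adj a b), (path h).IsPath
  path_symm : ∀ ⦃a b : V⦄ (h : H.Adj a b), path h.symm = (path h).reverse
  internal_avoid_image : ∀ ⦃a b : V⦄ (h : H.Adj a b) (w : W),
      w ∈ (path h).support → w ≠ toFun a → w ≠ toFun b → ∀ x : V, toFun x ≠ w
  internally_disjoint : ∀ ⦃a b a' b' : V⦄ (h : H.Adj a b) (h' : H.Adj a' b'),
      s(a, b) ≠ s(a', b') → ∀ w : W,
        w ∈ (path h).support → w ∈ (path h').support → w = toFun a ∨ w = toFun b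

/-- `H ≤ G`: some subdivision of `H` embeds as a subgraph into `G`. -/
def TopMinorLE {V : Type u} {W : Type v} (H : SimpleGraph V) (G : SimpleGraph W) : Prop :=
  Nonempty (TopMinorEmb H G)

/-- `G ≡ H`: `G` and `H` have the same topological type. -/
def TopEquiv {V : Type u} {W : Type v} (G : SimpleGraph V) (H : SimpleGraph W) : Prop :=
  TopMinorLE G H ∧ TopMinorLE H G

/-- `G` contains a ray (a one-way infinite path) as a subgraph. -/
def HasRay {V : Type u} (G : SimpleGraph V) : Prop :=
  ∃ f : ℕ → V, Function.Injective f ∧ ∀ n, G.Adj (f n) (f (n + 1))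

/-- `G` is rayless: it contains no ray as a subgraph. -/
def Rayless {V : Type u} (G : SimpleGraph V) : Prop := ¬ HasRay G

/-- Graphs (on vertex types in universe `u`), bundled with their vertex type. -/
def GraphSig := Σ V : Type u, SimpleGraph V

/-- `HasSchmidtRankAux α ⟨V, G⟩` holds iff the graph `G` has Schmidt rank `α`:
`G` has rank `0` iff it is finite, and for `α > 0`, `G` has rank `α` iff it has no
rank `< α` and there is a finite vertex set `X` such that every connected component
of `G - X` has some rank `< α`.  (For `α = 0` the clause below is equivalent to
finiteness of `G`, since no ordinal is `< 0`.) -/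
def HasSchmidtRankAux : Ordinal.{u} → GraphSig.{u} → Prop :=
  WellFounded.fix Ordinal.lt_wf fun α ih p =>
    (∀ β (hβ : β < α), ¬ ih β hβ p) ∧
    ∃ X : Set p.1, X.Finite ∧
      ∀ C : (p.2.induce Xᶜ).ConnectedComponent,
        ∃ β, ∃ hβ : β < α, ih β hβ ⟨C.supp, (p.2.induce Xᶜ).induce C.supp⟩

/-- The graph `G` has Schmidt rank `α`. -/
def HasSchmidtRank {V : Type u} (G : SimpleGraph V) (α : Ordinal.{u}) : Prop :=
  HasSchmidtRankAux α ⟨V, G⟩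

/-!
Schmidt rank is monotone under topological minors, by induction on the rank of the host.
Let `H ≤ G` and let `X` be a finite separator of `G` whose components have smaller rank.
Pull `X` back to the set `X'` of branch vertices mapped into `X` together with the endpoints
of the edges whose branch paths pass through `X` in their interior. Since branch paths are
internally disjoint, every vertex of `X` is interior to at most one of them, so `X'` is finite.
Each component of `H - X'` then embeds topologically into a component of `G - X`, so by
induction it has smaller rank, and `X'` witnesses that the rank of `H` is at most that of `G`.
Graphs of the same topological type therefore have the same rank.
-/

open SimpleGraph

namespace SimpleGraph.Walk

variable {V : Type*} {G : SimpleGraph V} {s : Set V} {u v : V}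

lemma induce_eq_reverse {p : G.Walk v u} {q : G.Walk u v} (hpq : p = q.reverse) (hp hq) :
    p.induce s hp = (q.induce s hq).reverse := by
  subst hpq
  refine map_injective_of_injective (f := (Embedding.induce (G := G) s).toHom)
    (Embedding.induce (G := G) s).injective _ _ ?_
  rw [← reverse_map, map_induce, map_induce]
  rfl

lemma connectedComponentMk_eq_of_mem_support (p : G.Walk u v) {w : V} (hw : w ∈ p.support) :
    G.connectedComponentMk w = G.connectedComponentMk u := by
  classical
  exact ConnectedComponent.sound (p.takeUntil w hw).reachable.symm

end SimpleGraph.Walk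

namespace TopMinorEmb

variable {V W : Type*} {H : SimpleGraph V} {G : SimpleGraph W} (e : TopMinorEmb H G)

def induce {s : Set V} {t : Set W} (hs : ∀ v ∈ s, e.toFun v ∈ t)
    (hpath : ∀ ⦃a b⦄ (h : H.Adj a b), a ∈ s → b ∈ s → ∀ w ∈ (e.path h).support, w ∈ t) :
    TopMinorEmb (H.induce s) (G.induce t) where
  toFun v := ⟨e.toFun v, hs v v.2⟩
  inj a b hab := Subtype.ext (e.inj (congrArg Subtype.val hab))
  path a b h := (e.path (induce_adj.1 h)).induce t (hpath _ a.2 b.2)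
  path_isPath a b h := by
    apply Walk.IsPath.of_map (f := (Embedding.induce t).toHom)
    rw [Walk.map_induce]
    exact e.path_isPath h
  path_symm a b h := Walk.induce_eq_reverse (e.path_symm h) _ _
  internal_avoid_image a b h w hw ha hb x hx := by
    simp only [Walk.support_induce, List.mem_attachWith] at hw
    exact e.internal_avoid_image _ w hw (ha <| Subtype.ext ·) (hb <| Subtype.ext ·) x
      (congrArg Subtype.val hx)
  internally_disjoint a b a' b' h h' hne w hw hw' := by
    simp only [Walk.support_induce, List.mem_attachWith] at hw hw'
    have hne' : s(a.1, b.1) ≠ s(a'.1, b'.1) := by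
      simpa [Sym2.eq_iff, Subtype.ext_iff] using hne
    simpa [Subtype.ext_iff] using e.internally_disjoint h h' hne' w hw hw'

lemma reachable {a b : V} (h : H.Reachable a b) : G.Reachable (e.toFun a) (e.toFun b) := by
  obtain ⟨p⟩ := h
  induction p with
  | nil => rfl
  | cons hab _ ih => exact (e.path hab).reachable.trans ih

def IsInnerVertex {a b : V} (h : H.Adj a b) (w : W) : Prop :=
  w ∈ (e.path h).support ∧ w ≠ e.toFun a ∧ w ≠ e.toFun b

lemma sym2_eq_of_isInnerVertex {a b a' b' : V} {h : H.Adj a b} {w : W}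
    (hw : e.IsInnerVertex h w) (h' : H.Adj a' b') (hw' : w ∈ (e.path h').support) :
    s(a, b) = s(a', b') := by
  by_contra hne
  obtain ⟨hw, ha, hb⟩ := hw
  exact (e.internally_disjoint h h' hne w hw hw').elim ha hb

lemma finite_setOf_isInnerVertex (w : W) :
    {v | ∃ b, ∃ h : H.Adj v b, e.IsInnerVertex h w}.Finite := by
  rcases Set.eq_empty_or_nonempty {v | ∃ b, ∃ h : H.Adj v b, e.IsInnerVertex h w} with hS | hS
  · exact hS ▸ Set.finite_empty
  obtain ⟨a, b, h, hw⟩ := hS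
  refine (Set.toFinite {a, b}).subset fun v ⟨b', h', hw'⟩ => ?_
  exact Sym2.mem_iff.1 (e.sym2_eq_of_isInnerVertex hw h' hw'.1 ▸ Sym2.mem_mk_left v b')

def pullback (X : Set W) : Set V :=
  {v | e.toFun v ∈ X ∨ ∃ w ∈ X, ∃ b, ∃ h : H.Adj v b, e.IsInnerVertex h w}

lemma finite_pullback {X : Set W} (hX : X.Finite) : (e.pullback X).Finite := by
  have : e.pullback X =
      e.toFun ⁻¹' X ∪ ⋃ w ∈ X, {v | ∃ b, ∃ h : H.Adj v b, e.IsInnerVertex h w} := by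
    ext v
    simp [pullback]
  rw [this]
  exact (hX.preimage e.inj.injOn).union (hX.biUnion fun w _ => e.finite_setOf_isInnerVertex w)

lemma toFun_notMem_of_notMem_pullback {X : Set W} {v : V} (hv : v ∉ e.pullback X) :
    e.toFun v ∉ X :=
  fun h => hv (Or.inl h)

lemma notMem_of_mem_path_support {X : Set W} {a b : V} (h : H.Adj a b)
    (ha : a ∉ e.pullback X) (hb : b ∉ e.pullback X) {w : W} (hw : w ∈ (e.path h).support) :
    w ∉ X := by
  intro hwX
  by_cases hwa : w = e.toFun a
  · exact ha (Or.inl (hwa ▸ hwX))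
  by_cases hwb : w = e.toFun b
  · exact hb (Or.inl (hwb ▸ hwX))
  exact ha (Or.inr ⟨w, hwX, b, h, hw, hwa, hwb⟩)

def induceCompl (X : Set W) : TopMinorEmb (H.induce (e.pullback X)ᶜ) (G.induce Xᶜ) :=
  e.induce (fun _ hv => e.toFun_notMem_of_notMem_pullback hv)
    fun _ _ h ha hb _ hw => e.notMem_of_mem_path_support h ha hb hw

end TopMinorEmb

theorem TopMinorLE.exists_induce_supp {V W : Type*} {H : SimpleGraph V} {G : SimpleGraph W}
    (hHG : TopMinorLE H G) (C : H.ConnectedComponent) :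
    ∃ D : G.ConnectedComponent, TopMinorLE (H.induce C.supp) (G.induce D.supp) := by
  obtain ⟨e⟩ := hHG
  obtain ⟨v₀, rfl⟩ := C.exists_rep
  have hs : ∀ v ∈ (H.connectedComponentMk v₀).supp,
      e.toFun v ∈ (G.connectedComponentMk (e.toFun v₀)).supp := fun v hv =>
    ConnectedComponent.sound (e.reachable (ConnectedComponent.exact hv))
  refine ⟨_, ⟨e.induce hs fun a b h ha _ w hw => ?_⟩⟩
  exact ((e.path h).connectedComponentMk_eq_of_mem_support hw).trans (hs a ha)

def SchmidtDecomposable {V : Type u} (G : SimpleGraph V) (α : Ordinal.{u}) : Prop :=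
  ∃ X : Set V, X.Finite ∧ ∀ C : (G.induce Xᶜ).ConnectedComponent,
    ∃ β < α, HasSchmidtRank ((G.induce Xᶜ).induce C.supp) β

section SchmidtRank

variable {V W : Type u} {H : SimpleGraph V} {G : SimpleGraph W} {α β : Ordinal.{u}}

lemma hasSchmidtRank_iff :
    HasSchmidtRank G α ↔ (∀ β < α, ¬ HasSchmidtRank G β) ∧ SchmidtDecomposable G α := by
  rw [HasSchmidtRank, HasSchmidtRankAux, WellFounded.fix_eq]
  simp only [SchmidtDecomposable, exists_prop]
  rfl

lemma HasSchmidtRank.eq (hα : HasSchmidtRank G α) (hβ : HasSchmidtRank G β) : α = β := by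
  by_contra hne
  rcases lt_or_gt_of_ne hne with h | h
  · exact (hasSchmidtRank_iff.1 hβ).1 α h hα
  · exact (hasSchmidtRank_iff.1 hα).1 β h hβ

lemma SchmidtDecomposable.exists_hasSchmidtRank_le (h : SchmidtDecomposable G α) :
    ∃ γ ≤ α, HasSchmidtRank G γ := by
  have hne : {γ | SchmidtDecomposable G γ}.Nonempty := ⟨α, h⟩
  refine ⟨sInf {γ | SchmidtDecomposable G γ}, csInf_le' h,
    hasSchmidtRank_iff.2 ⟨fun β hβ hrank => ?_, csInf_mem hne⟩⟩
  exact notMem_of_lt_csInf' hβ (hasSchmidtRank_iff.1 hrank).2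

theorem exists_hasSchmidtRank_le_of_topMinorLE (hHG : TopMinorLE H G) (hG : HasSchmidtRank G α) :
    ∃ γ ≤ α, HasSchmidtRank H γ := by
  induction α using WellFoundedLT.induction generalizing V W with
  | _ α ih =>
  obtain ⟨e⟩ := hHG
  obtain ⟨X, hX, hXC⟩ := (hasSchmidtRank_iff.1 hG).2
  refine SchmidtDecomposable.exists_hasSchmidtRank_le
    ⟨e.pullback X, e.finite_pullback hX, fun C => ?_⟩
  obtain ⟨D, hCD⟩ := TopMinorLE.exists_induce_supp ⟨e.induceCompl X⟩ C
  obtain ⟨β, hβ, hD⟩ := hXC D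
  obtain ⟨γ, hγ, hC⟩ := ih β hβ hCD hD
  exact ⟨γ, hγ.trans_lt hβ, hC⟩

theorem HasSchmidtRank.le_of_topMinorLE (hH : HasSchmidtRank H α) (hG : HasSchmidtRank G β)
    (hHG : TopMinorLE H G) : α ≤ β := by
  obtain ⟨γ, hγ, hH'⟩ := exists_hasSchmidtRank_le_of_topMinorLE hHG hG
  exact hH.eq hH' ▸ hγ

end SchmidtRank

theorem not_topEquiv_of_schmidtRank_ne_general {V W : Type u} {T : SimpleGraph V} {S : SimpleGraph W}
    {α β : Ordinal.{u}} (hα : HasSchmidtRank T α) (hβ : HasSchmidtRank S β) (hne : α ≠ β) :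
    ¬ (TopMinorLE T S ∧ TopMinorLE S T) :=
  fun ⟨hTS, hST⟩ => hne ((hα.le_of_topMinorLE hβ hTS).antisymm (hβ.le_of_topMinorLE hα hST))

/-- Rayless trees having distinct Schmidt ranks are not of the same topological type. -/
theorem not_topEquiv_of_schmidtRank_ne {V W : Type u} {T : SimpleGraph V} {S : SimpleGraph W}
    (hT : T.IsTree) (hS : S.IsTree) (hTr : Rayless T) (hSr : Rayless S)
    {α β : Ordinal.{u}} (hα : HasSchmidtRank T α) (hβ : HasSchmidtRank S β) (hne : α ≠ β) :
    ¬ (TopMinorLE T S ∧ TopMinorLE S T) :=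
  not_topEquiv_of_schmidtRank_ne_general hα hβ hne
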